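/- Let k be a field of characteristic 2 and suppose p ∈ k is a nonzero square, say p = c² with c ∈ k nonzero. Then Inn_{L_p} is isomorphic to Inn_B where B is the 2×2 matrix with rows (1, 1/c) and (0, 1) (explicitly, the matrix with rows (1,0),(c,1) conjugates L_p to c·B), and the fixed-point group H^p = {X ∈ SL(2,k) : L_p·X·L_p⁻¹ = X} is isomorphic as a group to the additive group (k, +), realized by the strictly upper-triangular unipotent subgroup {matrices with rows (1, x), (0, 1) : x ∈ k}. -/

import Mathlib

/-!
Conjugation by `M = !![1, 0; c, 1]` sends `L_{c²}` to `!![-c, 1; c² - c², c]`, which in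
characteristic 2 is `c • B` with `B = !![1, 1/c; 0, 1]`. Scalars act trivially by conjugation,
so `Inn_M` intertwines `Inn_{L_p}` with `Inn_B`, and the fixed group of `L_p` is `M⁻¹ (Fix B) M`.
A matrix commuting with a nonzero upper unipotent matrix is upper triangular with equal diagonal
entries `a`; determinant `1` forces `a² = 1`, hence `a = 1` because squaring is injective in
characteristic 2. So `Fix B` is the unipotent group `x ↦ !![1, x; 0, 1]`, a copy of `(k, +)`.
-/

namespace Matrix

section Conjugation

variable {n : Type*} [Fintype n] [DecidableEq n]

section CommRing

variable {R : Type*} [CommRing R]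

theorem inv_conj {C : Matrix n n R} (hC : IsUnit C.det) (A : Matrix n n R) :
    (C * A * C⁻¹)⁻¹ = C * A⁻¹ * C⁻¹ := by
  rw [mul_inv_rev, mul_inv_rev, nonsing_inv_nonsing_inv _ hC, mul_assoc]

theorem nonsing_inv_conj_mul {C : Matrix n n R} (hC : IsUnit C.det) (A B : Matrix n n R) :
    C⁻¹ * (A * B) * C = C⁻¹ * A * C * (C⁻¹ * B * C) := by
  simp only [mul_assoc, mul_nonsing_inv_cancel_left _ _ hC]

theorem conj_eq_conj_iff {C : Matrix n n R} (hC : IsUnit C.det) (X Y : Matrix n n R) :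
    C * X * C⁻¹ = C * Y * C⁻¹ ↔ X = Y := by
  rw [((isUnit_iff_isUnit_det _).mpr (isUnit_nonsing_inv_det _ hC)).mul_left_inj,
    ((isUnit_iff_isUnit_det _).mpr hC).mul_right_inj]

theorem conj_nonsing_inv_conj {C : Matrix n n R} (hC : IsUnit C.det) (X : Matrix n n R) :
    C * (C⁻¹ * X * C) * C⁻¹ = X := by
  simp [mul_assoc, hC]

theorem nonsing_inv_conj_conj {C : Matrix n n R} (hC : IsUnit C.det) (X : Matrix n n R) :
    C⁻¹ * (C * X * C⁻¹) * C = X := by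
  simp [mul_assoc, hC]

theorem mul_mul_inv_eq_self_iff_commute {A X : Matrix n n R} (hA : IsUnit A.det) :
    A * X * A⁻¹ = X ↔ Commute A X := by
  constructor
  · intro h
    calc A * X = A * X * A⁻¹ * A := (nonsing_inv_mul_cancel_right A _ hA).symm
      _ = X * A := by rw [h]
  · intro h
    rw [h.eq, mul_nonsing_inv_cancel_right A X hA]

end CommRing

variable {K : Type*} [Field K]

theorem smul_mul_mul_inv_smul {a : K} (ha : a ≠ 0) (B X : Matrix n n K) :
    a • B * X * (a • B)⁻¹ = B * X * B⁻¹ := by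
  by_cases hB : IsUnit B.det
  · rw [inv_eq_left_inv (B := a⁻¹ • B⁻¹) (by simp [nonsing_inv_mul _ hB, smul_smul, ha]),
      smul_mul_assoc, smul_mul_smul_comm, mul_inv_cancel₀ ha, one_smul]
  · have haB : ¬IsUnit (a • B).det := by
      simpa [det_smul, ha] using hB
    rw [nonsing_inv_apply_not_isUnit _ hB, nonsing_inv_apply_not_isUnit _ haB,
      mul_zero, mul_zero]

theorem conj_conj_eq_of_conj_eq_smul {C L B : Matrix n n K} (hC : IsUnit C.det) {a : K}
    (ha : a ≠ 0) (h : C * L * C⁻¹ = a • B) (X : Matrix n n K) :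
    C * (L * (C⁻¹ * X * C) * L⁻¹) * C⁻¹ = B * X * B⁻¹ := by
  rw [← smul_mul_mul_inv_smul ha B X, ← h, inv_conj hC]
  simp only [mul_assoc]

theorem conj_conj_eq_self_iff_of_conj_eq_smul {C L B : Matrix n n K} (hC : IsUnit C.det) {a : K}
    (ha : a ≠ 0) (h : C * L * C⁻¹ = a • B) (X : Matrix n n K) :
    B * (C * X * C⁻¹) * B⁻¹ = C * X * C⁻¹ ↔ L * X * L⁻¹ = X := by
  rw [← conj_conj_eq_of_conj_eq_smul hC ha h, nonsing_inv_conj_conj hC, conj_eq_conj_iff hC]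

end Conjugation

variable {R : Type*} [CommRing R]

theorem unipotent_mul_unipotent (x y : R) :
    !![1, x; 0, 1] * !![1, y; 0, 1] = !![(1 : R), x + y; 0, 1] := by
  simp [add_comm]

theorem commute_unipotent_iff [NoZeroDivisors R] {b : R} (hb : b ≠ 0)
    (X : Matrix (Fin 2) (Fin 2) R) :
    Commute !![1, b; 0, 1] X ↔ X 1 0 = 0 ∧ X 1 1 = X 0 0 := by
  have h11 : X 0 1 + b * X 1 1 = X 0 0 * b + X 0 1 ↔ X 1 1 = X 0 0 := by
    rw [add_comm, mul_comm, add_left_inj, mul_left_inj' hb]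
  rw [eta_fin_two X]
  simp [Commute, SemiconjBy, hb, h11]
  tauto

theorem inv_lowerUnipotent (c : R) : (!![1, 0; c, 1])⁻¹ = !![1, 0; -c, 1] :=
  inv_eq_right_inv (by simp [one_fin_two])

theorem lowerUnipotent_conj_antidiag (c p : R) :
    !![1, 0; c, 1] * !![0, 1; p, 0] * (!![1, 0; c, 1])⁻¹ = !![-c, 1; p - c ^ 2, c] := by
  rw [inv_lowerUnipotent]
  simp [sq, sub_eq_add_neg]

section CharTwo

variable {K : Type*} [Field K] [CharP K 2]

theorem lowerUnipotent_conj_antidiag_sq {c : K} (hc : c ≠ 0) :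
    !![1, 0; c, 1] * !![0, 1; c ^ 2, 0] * (!![1, 0; c, 1])⁻¹ = c • !![1, 1 / c; 0, 1] := by
  rw [lowerUnipotent_conj_antidiag, CharTwo.neg_eq, sub_self]
  simp [hc]

theorem det_eq_one_and_commute_unipotent_iff {b : K} (hb : b ≠ 0)
    (X : Matrix (Fin 2) (Fin 2) K) :
    X.det = 1 ∧ Commute !![1, b; 0, 1] X ↔ ∃ x, X = !![1, x; 0, 1] := by
  rw [commute_unipotent_iff hb]
  constructor
  · rintro ⟨hdet, h10, h11⟩
    have h00 : X 0 0 = 1 :=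
      CharTwo.sq_injective (by simpa [det_fin_two, h10, h11, sq] using hdet)
    refine ⟨X 0 1, ?_⟩
    conv_lhs => rw [eta_fin_two X, h10, h11, h00]
  · rintro ⟨x, rfl⟩
    simp

theorem setOf_det_eq_one_and_unipotent_conj_eq_self {b : K} (hb : b ≠ 0) :
    {X : Matrix (Fin 2) (Fin 2) K | X.det = 1 ∧ !![1, b; 0, 1] * X * (!![1, b; 0, 1])⁻¹ = X} =
      {X | ∃ x, X = !![1, x; 0, 1]} :=
  Set.ext fun X => (and_congr_right' (mul_mul_inv_eq_self_iff_commute (by simp))).trans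
    (det_eq_one_and_commute_unipotent_iff hb X)

theorem bijOn_conj_unipotent_setOf_antidiag_conj_eq_self {c : K} (hc : c ≠ 0) :
    Set.BijOn (fun x => (!![1, 0; c, 1])⁻¹ * !![1, x; 0, 1] * !![1, 0; c, 1]) Set.univ
      {X : Matrix (Fin 2) (Fin 2) K |
        X.det = 1 ∧ !![0, 1; c ^ 2, 0] * X * (!![0, 1; c ^ 2, 0])⁻¹ = X} := by
  set M : Matrix (Fin 2) (Fin 2) K := !![1, 0; c, 1]
  have hM : IsUnit M.det := by simp [M]
  have hfix : ∀ X, X.det = 1 ∧ !![0, 1; c ^ 2, 0] * X * (!![0, 1; c ^ 2, 0])⁻¹ = X ↔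
      ∃ x, M * X * M⁻¹ = !![1, x; 0, 1] := by
    intro X
    rw [← conj_conj_eq_self_iff_of_conj_eq_smul hM hc (lowerUnipotent_conj_antidiag_sq hc),
      ← det_conj ((isUnit_iff_isUnit_det M).mpr hM)]
    exact Set.ext_iff.mp (setOf_det_eq_one_and_unipotent_conj_eq_self (one_div_ne_zero hc)) _
  refine ⟨fun x _ => (hfix _).2 ⟨x, conj_nonsing_inv_conj hM _⟩, fun x _ y _ hxy => ?_,
    fun X hX => ?_⟩
  · have := congrArg (fun Y => M * Y * M⁻¹) hxy
    simpa [conj_nonsing_inv_conj hM] using congrFun (congrFun this 0) 1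
  · obtain ⟨x, hx⟩ := (hfix X).1 hX
    exact ⟨x, trivial, show M⁻¹ * _ * M = X by rw [← hx, nonsing_inv_conj_conj hM]⟩

end CharTwo

end Matrix

/-- Let k be a field of characteristic 2 and p = c² with c ≠ 0.
Then Inn_{L_p} is isomorphic to Inn_B with B = !![1, 1/c; 0, 1] (explicitly,
M = !![1,0;c,1] conjugates L_p to c·B); the fixed-point group of Inn_B in
SL(2,k) is the strictly upper-triangular unipotent subgroup
{!![1,x;0,1] : x ∈ k}; and the fixed-point group
H^p = {X ∈ SL(2,k) : L_p·X·L_p⁻¹ = X} is isomorphic as a group to (k,+). -/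
theorem stmt_9 {k : Type*} [Field k] [CharP k 2] (c : k) (hc : c ≠ 0) (p : k)
    (hp : p = c ^ 2) :
    (!![(1 : k), 0; c, 1] * !![(0 : k), 1; p, 0] * (!![(1 : k), 0; c, 1])⁻¹ =
        c • !![(1 : k), 1 / c; 0, 1]) ∧
    (∃ C : (Matrix (Fin 2) (Fin 2) k)ˣ, ∀ X : Matrix (Fin 2) (Fin 2) k, X.det = 1 →
        (C : Matrix (Fin 2) (Fin 2) k) *
          (!![(0 : k), 1; p, 0] *
            ((↑C⁻¹ : Matrix (Fin 2) (Fin 2) k) * X * (C : Matrix (Fin 2) (Fin 2) k)) *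
            (!![(0 : k), 1; p, 0])⁻¹) *
          (↑C⁻¹ : Matrix (Fin 2) (Fin 2) k) =
        !![(1 : k), 1 / c; 0, 1] * X * (!![(1 : k), 1 / c; 0, 1])⁻¹) ∧
    ({X : Matrix (Fin 2) (Fin 2) k | X.det = 1 ∧
        !![(1 : k), 1 / c; 0, 1] * X * (!![(1 : k), 1 / c; 0, 1])⁻¹ = X} =
      {X : Matrix (Fin 2) (Fin 2) k | ∃ x : k, X = !![1, x; 0, 1]}) ∧
    (∃ f : k → Matrix (Fin 2) (Fin 2) k,
      Set.BijOn f Set.univ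
        {X : Matrix (Fin 2) (Fin 2) k | X.det = 1 ∧
          !![(0 : k), 1; p, 0] * X * (!![(0 : k), 1; p, 0])⁻¹ = X} ∧
      ∀ x y : k, f (x + y) = f x * f y) := by
  subst hp
  have hM : IsUnit (!![(1 : k), 0; c, 1]).det := by simp
  have hconj := Matrix.lowerUnipotent_conj_antidiag_sq hc
  refine ⟨hconj, ⟨((Matrix.isUnit_iff_isUnit_det _).mpr hM).unit, fun X _ => ?_⟩,
    Matrix.setOf_det_eq_one_and_unipotent_conj_eq_self (one_div_ne_zero hc),
    _, Matrix.bijOn_conj_unipotent_setOf_antidiag_conj_eq_self hc, fun x y => ?_⟩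
  · rw [Matrix.coe_units_inv, IsUnit.unit_spec]
    exact Matrix.conj_conj_eq_of_conj_eq_smul hM hc hconj X
  · rw [← Matrix.unipotent_mul_unipotent, Matrix.nonsing_inv_conj_mul hM]
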